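/- Every nest 𝔑 in a vector space 𝔛 is reflexive: 𝔑 = Lat(Alg 𝔑), i.e., every subspace of 𝔛 that is invariant under all operators in Alg 𝔑 belongs to 𝔑. In fact 𝔑 = Lat(ℛ₁ ∩ Alg 𝔑), where ℛ₁ is the set of rank-one operators. -/

import Mathlib

/-!
Given `M ∈ Lat(ℛ₁ ∩ Alg 𝔑)`, we show that `M` is the join of the members of `𝔑` it contains.
For `0 ≠ x ∈ M`, the union `𝔑(x)₋` of the members of `𝔑` missing `x` is a subspace missing `x`
(it is the union of a chain), so some functional `φ` has `φ x = 1` and vanishes on `𝔑(x)₋`.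
For `y ∈ 𝔑(x)` the rank-one operator `φ ⊗ y` then lies in `Alg 𝔑`, since every member of `𝔑`
either contains `x`, hence `y`, or lies in `𝔑(x)₋`. It maps `x` to `y`, so `𝔑(x) ≤ M`.
-/

variable {F X : Type*} [Field F] [AddCommGroup X] [Module F X]

/-- A nest: a totally ordered family of subspaces containing `⊥` and `⊤`,
closed under arbitrary intersections and spans (joins) of subfamilies. -/
def IsNest (N : Set (Submodule F X)) : Prop :=
  IsChain (· ≤ ·) N ∧ ⊥ ∈ N ∧ ⊤ ∈ N ∧ ∀ S ⊆ N, sInf S ∈ N ∧ sSup S ∈ N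

/-- `𝔑(x)`: the intersection of all members of `𝔑` containing `x`. -/
def nestAt (N : Set (Submodule F X)) (x : X) : Submodule F X :=
  sInf {M | M ∈ N ∧ x ∈ M}

/-- `𝔑(x)₋`: the union (as a set of vectors) of all members of `𝔑` not containing `x`. -/
def nestBelow (N : Set (Submodule F X)) (x : X) : Set X :=
  ⋃ M ∈ {M | M ∈ N ∧ x ∉ M}, (M : Set X)

/-- `Alg 𝔑`: the set of endomorphisms leaving every member of `𝔑` invariant. -/
def nestAlg (N : Set (Submodule F X)) : Set (Module.End F X) :=
  {T | ∀ M ∈ N, ∀ x ∈ M, T x ∈ M}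

theorem Submodule.notMem_sSup_of_isChain {C : Set (Submodule F X)} (hC : IsChain (· ≤ ·) C)
    {x : X} (hx : x ≠ 0) (hxC : ∀ K ∈ C, x ∉ K) : x ∉ sSup C := by
  rcases C.eq_empty_or_nonempty with rfl | hne
  · simpa using hx
  rw [Submodule.mem_sSup_of_directed hne hC.directedOn]
  rintro ⟨K, hK, hxK⟩
  exact hxC K hK hxK

theorem Submodule.exists_dual_apply_eq_one_of_notMem {p : Submodule F X} {x : X} (hx : x ∉ p) :
    ∃ φ : Module.Dual F X, φ x = 1 ∧ p ≤ LinearMap.ker φ := by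
  obtain ⟨f, hfx, hfp⟩ := p.exists_dual_map_eq_bot_of_notMem hx inferInstance
  refine ⟨(f x)⁻¹ • f, by simp [hfx], fun v hv => ?_⟩
  have hfv : f v = 0 := (Submodule.mem_bot F).1 (hfp ▸ Submodule.mem_map_of_mem hv)
  simp [hfv]

section Nest

variable {N : Set (Submodule F X)} {x : X}

theorem mem_nestAt_self : x ∈ nestAt N x :=
  Submodule.mem_sInf.2 fun _ hM => hM.2

theorem nestAt_le {M : Submodule F X} (hM : M ∈ N) (hx : x ∈ M) : nestAt N x ≤ M :=
  sInf_le ⟨hM, hx⟩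

theorem nestAt_mem (hN : IsNest N) : nestAt N x ∈ N :=
  (hN.2.2.2 _ fun _ hM => hM.1).1

theorem exists_dual_apply_eq_one_vanishing_on_nestBelow (hN : IsChain (· ≤ ·) N) (hx : x ≠ 0) :
    ∃ φ : Module.Dual F X, φ x = 1 ∧ ∀ v ∈ nestBelow N x, φ v = 0 := by
  let below : Set (Submodule F X) := {M | M ∈ N ∧ x ∉ M}
  have hxB : x ∉ sSup below :=
    Submodule.notMem_sSup_of_isChain (hN.mono fun _ hM => hM.1) hx fun _ hM => hM.2
  obtain ⟨φ, hφx, hφB⟩ := Submodule.exists_dual_apply_eq_one_of_notMem hxB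
  refine ⟨φ, hφx, fun v hv => ?_⟩
  obtain ⟨M, hM, hvM⟩ := Set.mem_iUnion₂.1 hv
  exact hφB (le_sSup hM hvM)

theorem smulRight_mem_nestAlg {φ : Module.Dual F X} {y : X} (hy : y ∈ nestAt N x)
    (hφ : ∀ v ∈ nestBelow N x, φ v = 0) : φ.smulRight y ∈ nestAlg N := by
  intro M hM v hv
  by_cases hxM : x ∈ M
  · exact M.smul_mem (φ v) (nestAt_le hM hxM hy)
  · have hφv : φ v = 0 := hφ v (Set.mem_iUnion₂.2 ⟨M, ⟨hM, hxM⟩, hv⟩)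
    simp [hφv]

theorem nestAt_le_of_forall_rankOne {M : Submodule F X} (hN : IsChain (· ≤ ·) N)
    (hM : ∀ T ∈ nestAlg N, (∃ (z : X) (φ : Module.Dual F X), T = φ.smulRight z ∧ T ≠ 0) →
      ∀ x ∈ M, T x ∈ M)
    (hxM : x ∈ M) (hx : x ≠ 0) : nestAt N x ≤ M := by
  intro y hy
  by_contra hyM
  obtain ⟨φ, hφx, hφ⟩ := exists_dual_apply_eq_one_vanishing_on_nestBelow hN hx
  have hTx : φ.smulRight y x = y := by simp [hφx]
  have hT : φ.smulRight y ≠ 0 := fun h => hyM (by rw [← hTx, h]; exact M.zero_mem)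
  exact hyM (hTx ▸ hM _ (smulRight_mem_nestAlg hy hφ) ⟨y, φ, rfl, hT⟩ x hxM)

theorem mem_of_forall_rankOne {M : Submodule F X} (hN : IsNest N)
    (hM : ∀ T ∈ nestAlg N, (∃ (z : X) (φ : Module.Dual F X), T = φ.smulRight z ∧ T ≠ 0) →
      ∀ x ∈ M, T x ∈ M) : M ∈ N := by
  let inside : Set (Submodule F X) := {K | K ∈ N ∧ K ≤ M}
  have hM₀ : sSup inside = M := by
    refine le_antisymm (sSup_le fun K hK => hK.2) fun x hxM => ?_
    by_cases hx : x = 0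
    · exact hx ▸ Submodule.zero_mem _
    exact le_sSup (s := inside) ⟨nestAt_mem hN, nestAt_le_of_forall_rankOne hN.1 hM hxM hx⟩ mem_nestAt_self
  exact hM₀ ▸ (hN.2.2.2 _ fun _ hK => hK.1).2

end Nest

/-- every nest is reflexive, indeed `𝔑 = Lat(ℛ₁ ∩ Alg 𝔑)`. -/
theorem nest_reflexive {N : Set (Submodule F X)} (hN : IsNest N) :
    N = {M : Submodule F X | ∀ T ∈ nestAlg N, ∀ x ∈ M, T x ∈ M} ∧
    N = {M : Submodule F X | ∀ T ∈ nestAlg N,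
      (∃ (z : X) (φ : Module.Dual F X), T = φ.smulRight z ∧ T ≠ 0) →
        ∀ x ∈ M, T x ∈ M} := by
  refine ⟨Set.Subset.antisymm (fun M hM T hT => hT M hM) fun M hM => ?_,
    Set.Subset.antisymm (fun M hM T hT _ => hT M hM) fun M hM => mem_of_forall_rankOne hN hM⟩
  exact mem_of_forall_rankOne hN fun T hT _ => hM T hT
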